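/- Let Δ be a φ-saturated set of intuitionistic formulas in IPL (the logic generated by H_IPL). Then the associated valuation v_Δ is a level valuation in M_IPL, i.e., v_Δ ∈ L_IPL, and for every formula α, v_Δ(α) = T if and only if α ∈ Δ. -/
import Mathlib


/-- Intuitionistic formulas over signature Ω = {¬, →, ∨, ∧}. -/
inductive IF
  | var : ℕ → IF
  | neg : IF → IF
  | imp : IF → IF → IF
  | dis : IF → IF → IF
  | con : IF → IF → IF
deriving DecidableEq

/-- The three intuitionistic truth values F, U, T. -/
inductive VI
  | F | U | T
deriving DecidableEq

def inegOp : VI → Set VI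
  | .F => {.U, .T}
  | .U => {.U, .T}
  | .T => {.F}

def iimpOp : VI → VI → Set VI
  | .T, .T => {.T}
  | .T, _ => {.F}
  | _, .T => {.T}
  | _, _ => {.U, .T}

def idisOp : VI → VI → Set VI
  | .T, _ => {.T}
  | _, .T => {.T}
  | _, _ => {.F}

def iconOp : VI → VI → Set VI
  | .T, .T => {.T}
  | _, _ => {.F}

/-- Valuations over the Nmatrix M_IPL. -/
def IsValI (v : IF → VI) : Prop :=
  (∀ α, v (.neg α) ∈ inegOp (v α)) ∧
  (∀ α β, v (.imp α β) ∈ iimpOp (v α) (v β)) ∧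
  (∀ α β, v (.dis α β) ∈ idisOp (v α) (v β)) ∧
  (∀ α β, v (.con α β) ∈ iconOp (v α) (v β))

/-- Val₊(M_IPL): valuations taking only values T, F on propositional variables. -/
def ValPlus : Set (IF → VI) :=
  {v | IsValI v ∧ ∀ n, v (.var n) = VI.T ∨ v (.var n) = VI.F}

/-- Complexity of an intuitionistic formula. -/
def co : IF → ℕ
  | .var _ => 0
  | .neg α => co α + 1
  | .imp α β => co α + co β + 1
  | .dis α β => co α + co β + 1
  | .con α β => co α + co β + 1

/-- The levels L_k for IPL. -/
def LevelI : ℕ → Set (IF → VI)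
  | 0 => ValPlus
  | (k+1) => {v ∈ LevelI k | ∀ α, co α ≤ k + 1 → v α = VI.U →
      ∃ w ∈ LevelI k, w α = VI.F ∧ ∀ β, v β = VI.T → w β = VI.T}

/-- Intuitionistic level valuations L_IPL = ⋂_{k ≥ 0} L_k. -/
def LIPL : Set (IF → VI) := ⋂ k, LevelI k

/-- The consequence relation Γ ⊢_IPL φ of the Hilbert calculus H_IPL. -/
inductive IDeriv (Γ : Set IF) : IF → Prop
  | prem {φ : IF} : φ ∈ Γ → IDeriv Γ φ
  | ax1 (α β : IF) : IDeriv Γ (α.imp (β.imp α))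
  | ax2 (α β γ : IF) : IDeriv Γ ((α.imp (β.imp γ)).imp ((α.imp β).imp (α.imp γ)))
  | ax3 (α β : IF) : IDeriv Γ (α.imp (β.imp (α.con β)))
  | ax4 (α β : IF) : IDeriv Γ ((α.con β).imp α)
  | ax5 (α β : IF) : IDeriv Γ ((α.con β).imp β)
  | ax6 (α β : IF) : IDeriv Γ (α.imp (α.dis β))
  | ax7 (α β : IF) : IDeriv Γ (β.imp (α.dis β))
  | ax8 (α β γ : IF) : IDeriv Γ ((α.imp γ).imp ((β.imp γ).imp ((α.dis β).imp γ)))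
  | ax9 (α β : IF) : IDeriv Γ ((β.imp α).imp ((β.imp α.neg).imp β.neg))
  | ax10 (α β : IF) : IDeriv Γ (α.imp (α.neg.imp β))
  | mp {α β : IF} : IDeriv Γ (α.imp β) → IDeriv Γ α → IDeriv Γ β

/-- Δ is φ-saturated (w.r.t. ⊢_IPL). -/
def ISat (Δ : Set IF) (φ : IF) : Prop :=
  ¬ IDeriv Δ φ ∧ ∀ α ∉ Δ, IDeriv (insert α Δ) φ

open Classical in
/-- The valuation v_Δ associated to a φ-saturated set Δ in IPL. -/
noncomputable def vDeltaI (Δ : Set IF) : IF → VI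
  | .var n => if IF.var n ∈ Δ then VI.T else VI.F
  | .neg α => if IF.neg α ∈ Δ then VI.T else if α ∈ Δ then VI.F else VI.U
  | .imp α β => if IF.imp α β ∈ Δ then VI.T else if α ∈ Δ then VI.F else VI.U
  | .con α β => if α ∈ Δ ∧ β ∈ Δ then VI.T else VI.F
  | .dis α β => if α ∈ Δ ∨ β ∈ Δ then VI.T else VI.F

/-- Λ is closed under (immediate, hence all) subformulas. -/
def SubClosedI (Λ : Set IF) : Prop :=
  (∀ α, IF.neg α ∈ Λ → α ∈ Λ) ∧
  (∀ α β, IF.imp α β ∈ Λ → α ∈ Λ ∧ β ∈ Λ) ∧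
  (∀ α β, IF.dis α β ∈ Λ → α ∈ Λ ∧ β ∈ Λ) ∧
  (∀ α β, IF.con α β ∈ Λ → α ∈ Λ ∧ β ∈ Λ)

/-- Intuitionistic partial valuations with domain Λ (modelled as total functions
constrained on Λ). -/
def IsPValI (Λ : Set IF) (v : IF → VI) : Prop :=
  (∀ n, IF.var n ∈ Λ → v (.var n) = VI.T ∨ v (.var n) = VI.F) ∧
  (∀ α, IF.neg α ∈ Λ → v (.neg α) ∈ inegOp (v α)) ∧
  (∀ α β, IF.imp α β ∈ Λ → v (.imp α β) ∈ iimpOp (v α) (v β)) ∧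
  (∀ α β, IF.dis α β ∈ Λ → v (.dis α β) ∈ idisOp (v α) (v β)) ∧
  (∀ α β, IF.con α β ∈ Λ → v (.con α β) ∈ iconOp (v α) (v β))

/-- iPLV'(Λ): intuitionistic partial' level valuations over Λ. -/
def iPLV' (Λ : Set IF) : Set (IF → VI) :=
  {v | IsPValI Λ v ∧ ∀ α ∈ Λ, v α = VI.U →
    ∃ w ∈ LIPL, w α = VI.F ∧ ∀ β ∈ Λ, v β = VI.T → w β = VI.T}

/-- iPLV(Λ): intuitionistic partial level valuations over Λ, defined as the largest
subset of iPV(Λ) whose condition is witnessed inside itself. -/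
def iPLV (Λ : Set IF) : Set (IF → VI) :=
  ⋃₀ {S | (∀ v ∈ S, IsPValI Λ v) ∧
      ∀ v ∈ S, ∀ α ∈ Λ, v α = VI.U →
        ∃ w ∈ S, w α = VI.F ∧ ∀ β ∈ Λ, v β = VI.T → w β = VI.T}

/-- Set of subformulas of an intuitionistic formula. -/
def IF.subf : IF → Finset IF
  | .var n => {.var n}
  | .neg α => insert (.neg α) α.subf
  | .imp α β => insert (.imp α β) (α.subf ∪ β.subf)
  | .dis α β => insert (.dis α β) (α.subf ∪ β.subf)
  | .con α β => insert (.con α β) (α.subf ∪ β.subf)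

/-- Γ ⊨_iPLV φ : consequence w.r.t. the intuitionistic truth tables, over the set Λ
of subformulas of Γ ∪ {φ}. -/
def iPLVConseq (Γ : Finset IF) (φ : IF) : Prop :=
  ∀ v ∈ iPLV (↑(Γ.biUnion IF.subf ∪ φ.subf) : Set IF),
    (∀ β ∈ Γ, v β = VI.T) → v φ = VI.T

-- AUX START
theorem IDeriv.mono {Γ Γ' : Set IF} (h : Γ ⊆ Γ') {α : IF} (d : IDeriv Γ α) : IDeriv Γ' α := by
  induction d with
  | prem hp => exact .prem (h hp)
  | ax1 a b => exact .ax1 a b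
  | ax2 a b c => exact .ax2 a b c
  | ax3 a b => exact .ax3 a b
  | ax4 a b => exact .ax4 a b
  | ax5 a b => exact .ax5 a b
  | ax6 a b => exact .ax6 a b
  | ax7 a b => exact .ax7 a b
  | ax8 a b c => exact .ax8 a b c
  | ax9 a b => exact .ax9 a b
  | ax10 a b => exact .ax10 a b
  | mp _ _ ih1 ih2 => exact .mp ih1 ih2

theorem IDeriv.id (Γ : Set IF) (α : IF) : IDeriv Γ (α.imp α) :=
  .mp (.mp (.ax2 α (α.imp α) α) (.ax1 α (α.imp α))) (.ax1 α α)

theorem IDeriv.deduction {Γ : Set IF} {α β : IF} (h : IDeriv (insert α Γ) β) :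
    IDeriv Γ (α.imp β) := by
  induction h with
  | @prem ψ hp =>
    rcases hp with rfl | hp
    · exact IDeriv.id Γ _
    · exact .mp (.ax1 ψ α) (.prem hp)
  | ax1 a b => exact .mp (.ax1 _ α) (.ax1 a b)
  | ax2 a b c => exact .mp (.ax1 _ α) (.ax2 a b c)
  | ax3 a b => exact .mp (.ax1 _ α) (.ax3 a b)
  | ax4 a b => exact .mp (.ax1 _ α) (.ax4 a b)
  | ax5 a b => exact .mp (.ax1 _ α) (.ax5 a b)
  | ax6 a b => exact .mp (.ax1 _ α) (.ax6 a b)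
  | ax7 a b => exact .mp (.ax1 _ α) (.ax7 a b)
  | ax8 a b c => exact .mp (.ax1 _ α) (.ax8 a b c)
  | ax9 a b => exact .mp (.ax1 _ α) (.ax9 a b)
  | ax10 a b => exact .mp (.ax1 _ α) (.ax10 a b)
  | mp _ _ ih1 ih2 => exact .mp (.mp (.ax2 _ _ _) ih1) ih2

theorem IDeriv.compact {Γ : Set IF} {α : IF} (h : IDeriv Γ α) :
    ∃ s : Finset IF, ↑s ⊆ Γ ∧ IDeriv (↑s : Set IF) α := by
  induction h with
  | @prem ψ hp => exact ⟨{ψ}, by simpa using hp, .prem (by simp)⟩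
  | ax1 a b => exact ⟨∅, by simp, .ax1 a b⟩
  | ax2 a b c => exact ⟨∅, by simp, .ax2 a b c⟩
  | ax3 a b => exact ⟨∅, by simp, .ax3 a b⟩
  | ax4 a b => exact ⟨∅, by simp, .ax4 a b⟩
  | ax5 a b => exact ⟨∅, by simp, .ax5 a b⟩
  | ax6 a b => exact ⟨∅, by simp, .ax6 a b⟩
  | ax7 a b => exact ⟨∅, by simp, .ax7 a b⟩
  | ax8 a b c => exact ⟨∅, by simp, .ax8 a b c⟩
  | ax9 a b => exact ⟨∅, by simp, .ax9 a b⟩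
  | ax10 a b => exact ⟨∅, by simp, .ax10 a b⟩
  | mp _ _ ih1 ih2 =>
    obtain ⟨s1, hs1, d1⟩ := ih1
    obtain ⟨s2, hs2, d2⟩ := ih2
    refine ⟨s1 ∪ s2, ?_, .mp (d1.mono ?_) (d2.mono ?_)⟩ <;>
      simp [Set.union_subset_iff, hs1, hs2, Finset.coe_union]

theorem finset_subset_chain {c : Set (Set IF)} (hc : IsChain (· ⊆ ·) c)
    (hne : c.Nonempty) (s : Finset IF) (hs : ↑s ⊆ ⋃₀ c) : ∃ t ∈ c, ↑s ⊆ t := by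
  classical
  induction s using Finset.induction with
  | empty => exact ⟨hne.choose, hne.choose_spec, by simp⟩
  | @insert a s ha ih =>
    have hsub : (↑s : Set IF) ⊆ ⋃₀ c := by
      refine subset_trans ?_ hs; simp [Finset.coe_insert, Set.subset_insert]
    obtain ⟨t, htc, hts⟩ := ih hsub
    have hac : a ∈ ⋃₀ c := hs (by simp)
    obtain ⟨t', ht'c, hat'⟩ := hac
    rcases eq_or_ne t t' with rfl | hne'
    · refine ⟨t, htc, ?_⟩
      rw [Finset.coe_insert, Set.insert_subset_iff]; exact ⟨hat', hts⟩
    · rcases hc htc ht'c hne' with h1 | h1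
      · refine ⟨t', ht'c, ?_⟩
        rw [Finset.coe_insert, Set.insert_subset_iff]; exact ⟨hat', hts.trans h1⟩
      · refine ⟨t, htc, ?_⟩
        rw [Finset.coe_insert, Set.insert_subset_iff]; exact ⟨h1 hat', hts⟩

theorem lindenbaum {Γ : Set IF} {ψ : IF} (h : ¬ IDeriv Γ ψ) :
    ∃ Δ, Γ ⊆ Δ ∧ ISat Δ ψ := by
  have key : ∀ c ⊆ {Θ : Set IF | ¬ IDeriv Θ ψ}, IsChain (· ⊆ ·) c → c.Nonempty →
      ∃ ub ∈ {Θ : Set IF | ¬ IDeriv Θ ψ}, ∀ s ∈ c, s ⊆ ub := by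
    intro c hcS hchain hcne
    refine ⟨⋃₀ c, ?_, fun s hs => Set.subset_sUnion_of_mem hs⟩
    intro hd
    obtain ⟨s, hs, ds⟩ := hd.compact
    obtain ⟨t, htc, hst⟩ := finset_subset_chain hchain hcne s hs
    exact hcS htc (ds.mono hst)
  obtain ⟨m, hΓm, hm⟩ := zorn_subset_nonempty {Θ : Set IF | ¬ IDeriv Θ ψ} key Γ h
  refine ⟨m, hΓm, hm.1, fun α hα => ?_⟩
  by_contra hd
  exact hα (hm.2 hd (Set.subset_insert α m) (Set.mem_insert α m))

section Sat
variable {Δ : Set IF} {φ : IF}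

theorem ISat.closed (h : ISat Δ φ) {α : IF} (d : IDeriv Δ α) : α ∈ Δ := by
  by_contra hα
  exact h.1 (.mp (IDeriv.deduction (h.2 α hα)) d)

theorem ISat.dis_mem (h : ISat Δ φ) {α β : IF} (hd : α.dis β ∈ Δ) : α ∈ Δ ∨ β ∈ Δ := by
  by_contra hc
  push_neg at hc
  exact h.1 (.mp (.mp (.mp (.ax8 α β φ) (IDeriv.deduction (h.2 α hc.1)))
    (IDeriv.deduction (h.2 β hc.2))) (.prem hd))

theorem ISat.neg_not_mem (h : ISat Δ φ) {α : IF} (hα : α ∈ Δ) : α.neg ∉ Δ := fun hn =>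
  h.1 (.mp (.mp (.ax10 α φ) (.prem hα)) (.prem hn))

theorem ISat.imp_mem (h : ISat Δ φ) {α β : IF} (hβ : β ∈ Δ) : α.imp β ∈ Δ :=
  h.closed (.mp (.ax1 β α) (.prem hβ))

theorem ISat.imp_not_mem (h : ISat Δ φ) {α β : IF} (hα : α ∈ Δ) (hβ : β ∉ Δ) :
    α.imp β ∉ Δ := fun hi => hβ (h.closed (.mp (.prem hi) (.prem hα)))

theorem ISat.vT_iff (h : ISat Δ φ) (α : IF) : vDeltaI Δ α = VI.T ↔ α ∈ Δ := by
  cases α with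
  | var n => simp only [vDeltaI]; split_ifs with h1 <;> simp [h1]
  | neg a => simp only [vDeltaI]; split_ifs with h1 h2 <;> simp_all
  | imp a b => simp only [vDeltaI]; split_ifs with h1 h2 <;> simp_all
  | dis a b =>
    simp only [vDeltaI]
    split_ifs with h1
    · rcases h1 with h1 | h1
      · simp [h.closed (.mp (.ax6 a b) (.prem h1))]
      · simp [h.closed (.mp (.ax7 a b) (.prem h1))]
    · simp only [show (VI.F = VI.T) ↔ False by simp, false_iff]
      intro hm
      exact h1 (h.dis_mem hm)
  | con a b =>
    simp only [vDeltaI]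
    split_ifs with h1
    · simp [h.closed (.mp (.mp (.ax3 a b) (.prem h1.1)) (.prem h1.2))]
    · simp only [show (VI.F = VI.T) ↔ False by simp, false_iff]
      intro hm
      exact h1 ⟨h.closed (.mp (.ax4 a b) (.prem hm)), h.closed (.mp (.ax5 a b) (.prem hm))⟩

theorem ISat.valI (h : ISat Δ φ) : IsValI (vDeltaI Δ) := by
  refine ⟨fun α => ?_, fun α β => ?_, fun α β => ?_, fun α β => ?_⟩
  · by_cases hα : α ∈ Δ
    · have := h.neg_not_mem hα
      rw [(h.vT_iff α).2 hα]
      simp [vDeltaI, this, hα, inegOp]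
    · have hT : vDeltaI Δ α ≠ VI.T := fun ht => hα ((h.vT_iff α).1 ht)
      have hnT : vDeltaI Δ (α.neg) = VI.T ∨ vDeltaI Δ (α.neg) = VI.U := by
        simp only [vDeltaI]
        split_ifs <;> simp_all
      cases hv : vDeltaI Δ α <;> simp [hv] at hT ⊢ <;>
        · rcases hnT with h1 | h1 <;> simp [inegOp, h1]
  · by_cases hα : α ∈ Δ <;> by_cases hβ : β ∈ Δ
    · rw [(h.vT_iff α).2 hα, (h.vT_iff β).2 hβ, (h.vT_iff _).2 (h.imp_mem hβ)]
      simp [iimpOp]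
    · have hnm := h.imp_not_mem hα hβ
      rw [(h.vT_iff α).2 hα]
      have : vDeltaI Δ (α.imp β) = VI.F := by simp [vDeltaI, hnm, hα]
      rw [this]
      have hT : vDeltaI Δ β ≠ VI.T := fun ht => hβ ((h.vT_iff β).1 ht)
      cases hv : vDeltaI Δ β <;> simp_all [iimpOp]
    · rw [(h.vT_iff β).2 hβ, (h.vT_iff _).2 (h.imp_mem hβ)]
      have hT : vDeltaI Δ α ≠ VI.T := fun ht => hα ((h.vT_iff α).1 ht)
      cases hv : vDeltaI Δ α <;> simp_all [iimpOp]
    · have hi : vDeltaI Δ (α.imp β) = VI.T ∨ vDeltaI Δ (α.imp β) = VI.U := by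
        simp only [vDeltaI]; split_ifs <;> simp_all
      have hTa : vDeltaI Δ α ≠ VI.T := fun ht => hα ((h.vT_iff α).1 ht)
      have hTb : vDeltaI Δ β ≠ VI.T := fun ht => hβ ((h.vT_iff β).1 ht)
      cases hva : vDeltaI Δ α <;> cases hvb : vDeltaI Δ β <;> simp_all [iimpOp] <;>
        · rcases hi with h1 | h1 <;> simp [h1]
  · have hT : vDeltaI Δ (α.dis β) = VI.T ↔ (α ∈ Δ ∨ β ∈ Δ) := by
      simp only [vDeltaI]; split_ifs with h1 <;> simp [h1]
    have hTF : vDeltaI Δ (α.dis β) = VI.T ∨ vDeltaI Δ (α.dis β) = VI.F := by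
      simp only [vDeltaI]; split_ifs <;> simp
    by_cases hα : α ∈ Δ
    · rw [hT.2 (Or.inl hα), (h.vT_iff α).2 hα]; simp [idisOp]
    · by_cases hβ : β ∈ Δ
      · rw [hT.2 (Or.inr hβ), (h.vT_iff β).2 hβ]
        cases hv : vDeltaI Δ α <;> simp [idisOp]
      · have hne : vDeltaI Δ (α.dis β) = VI.F := by
          rcases hTF with h1 | h1
          · exact absurd (hT.1 h1) (by tauto)
          · exact h1
        rw [hne]
        have h1 : vDeltaI Δ α ≠ VI.T := fun ht => hα ((h.vT_iff α).1 ht)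
        have h2 : vDeltaI Δ β ≠ VI.T := fun ht => hβ ((h.vT_iff β).1 ht)
        cases hv1 : vDeltaI Δ α <;> cases hv2 : vDeltaI Δ β <;> simp_all [idisOp]
  · have hT : vDeltaI Δ (α.con β) = VI.T ↔ (α ∈ Δ ∧ β ∈ Δ) := by
      simp only [vDeltaI]; split_ifs with h1 <;> simp [h1]
    have hTF : vDeltaI Δ (α.con β) = VI.T ∨ vDeltaI Δ (α.con β) = VI.F := by
      simp only [vDeltaI]; split_ifs <;> simp
    by_cases hα : α ∈ Δ
    · by_cases hβ : β ∈ Δ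
      · rw [hT.2 ⟨hα, hβ⟩, (h.vT_iff α).2 hα, (h.vT_iff β).2 hβ]; simp [iconOp]
      · have hne : vDeltaI Δ (α.con β) = VI.F := by
          rcases hTF with h1 | h1
          · exact absurd (hT.1 h1) (by tauto)
          · exact h1
        rw [hne]
        have h2 : vDeltaI Δ β ≠ VI.T := fun ht => hβ ((h.vT_iff β).1 ht)
        cases hv1 : vDeltaI Δ α <;> cases hv2 : vDeltaI Δ β <;> simp_all [iconOp]
    · have hne : vDeltaI Δ (α.con β) = VI.F := by
        rcases hTF with h1 | h1
        · exact absurd (hT.1 h1) (by tauto)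
        · exact h1
      rw [hne]
      have h1 : vDeltaI Δ α ≠ VI.T := fun ht => hα ((h.vT_iff α).1 ht)
      cases hv1 : vDeltaI Δ α <;> cases hv2 : vDeltaI Δ β <;> simp_all [iconOp]

end Sat

theorem vDelta_mem_level : ∀ k : ℕ, ∀ (Δ : Set IF) (φ : IF), ISat Δ φ →
    vDeltaI Δ ∈ LevelI k := by
  intro k
  induction k with
  | zero =>
    intro Δ φ h
    exact ⟨h.valI, fun n => by simp only [vDeltaI]; split_ifs <;> simp⟩
  | succ k ih =>
    intro Δ φ h
    refine ⟨ih Δ φ h, fun α _ hU => ?_⟩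
    cases α with
    | var n => simp only [vDeltaI] at hU; split_ifs at hU
    | dis a b => simp only [vDeltaI] at hU; split_ifs at hU
    | con a b => simp only [vDeltaI] at hU; split_ifs at hU
    | neg a =>
      simp only [vDeltaI] at hU
      split_ifs at hU with h1 h2
      have hnd : ¬ IDeriv (insert a Δ) a.neg := by
        intro d
        exact h1 (h.closed (.mp (.mp (.ax9 a a) (IDeriv.id Δ a)) (IDeriv.deduction d)))
      obtain ⟨Δ', hsub, hsat⟩ := lindenbaum hnd
      refine ⟨vDeltaI Δ', ih Δ' _ hsat, ?_, fun β hβ => ?_⟩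
      · have hna : a.neg ∉ Δ' := fun hm => hsat.1 (.prem hm)
        have haΔ' : a ∈ Δ' := hsub (Set.mem_insert a Δ)
        simp [vDeltaI, hna, haΔ']
      · exact (hsat.vT_iff β).2 (hsub (Set.subset_insert a Δ ((h.vT_iff β).1 hβ)))
    | imp a b =>
      simp only [vDeltaI] at hU
      split_ifs at hU with h1 h2
      have hnd : ¬ IDeriv (insert a Δ) (a.imp b) := by
        intro d
        exact h1 (h.closed (IDeriv.deduction (.mp d (.prem (Set.mem_insert a Δ)))))
      obtain ⟨Δ', hsub, hsat⟩ := lindenbaum hnd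
      refine ⟨vDeltaI Δ', ih Δ' _ hsat, ?_, fun β hβ => ?_⟩
      · have hni : a.imp b ∉ Δ' := fun hm => hsat.1 (.prem hm)
        have haΔ' : a ∈ Δ' := hsub (Set.mem_insert a Δ)
        simp [vDeltaI, hni, haΔ']
      · exact (hsat.vT_iff β).2 (hsub (Set.subset_insert a Δ ((h.vT_iff β).1 hβ)))
-- AUX END

/-- the valuation v_Δ of a φ-saturated set Δ in IPL is a level
valuation in M_IPL, with v_Δ(α) = T iff α ∈ Δ. -/
theorem vDeltaI_level (Δ : Set IF) (φ : IF) (h : ISat Δ φ) :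
    vDeltaI Δ ∈ LIPL ∧ ∀ α, (vDeltaI Δ α = VI.T ↔ α ∈ Δ) :=
  ⟨Set.mem_iInter.2 fun k => vDelta_mem_level k Δ φ h, fun α => h.vT_iff α⟩
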